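/- Let G be a finite simple graph with vertex enumeration x_1, …, x_n, let λ > 0 and C > 0 be reals, and define T recursively by T(x_i) := (2/(5λ)) · Σ_{j < i, x_j ~ x_i} T(x_j) + 10·C·deg(x_i)/λ. For k ≥ 2 and indices i < j, let z_{k,i,j} denote the number of k-node directed paths i = p_1 < p_2 < ⋯ < p_k (with x_{p_l} adjacent to x_{p_{l+1}} for all 1 ≤ l < k) such that p_2, …, p_k ≥ j, and set z_{1,i,j} := 1; let z_{k,i} := z_{k,i,i+1} for k ≥ 2 and z_{1,i} := 1. Then for every η ∈ {0, 1, …, n−1}: Σ_{i=1}^{n} T(x_i) = Σ_{i=1}^{η} T(x_i) · ( Σ_{k=1}^{n} z_{k,i,η+1} · (2/(5λ))^{k−1} ) + Σ_{i=η+1}^{n} (10·C·deg(x_i)/λ) · ( Σ_{k=1}^{n} z_{k,i} · (2/(5λ))^{k−1} ). -/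

import Mathlib

/-!
Write the recursion as `T_i = a ∑_{j < i, j ~ i} T_j + b_i` with `a = 2/(5λ)`,
`b_i = 10 C deg(x_i)/λ`, and let `W(i, j) = ∑ₖ z_{k+1,i,j} aᵏ`. Splitting a path at its second
node gives `W(i, j) = 1 + a ∑ W(m, m+1)` over the neighbours `m > i` with `m ≥ j`; hence lowering
the threshold from `e + 1` to `e` adds `a W(e, e+1)` to `W(i, ·)` exactly for the neighbours
`i < e` of `e`. Moving `e` from the second sum of the identity to the first thus trades
`b_e W(e, e+1)` for `T_e W(e, e+1) - a W(e, e+1) ∑_{j < e, j ~ e} T_j`, which is the same by the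
recursion. Downward induction on `η`, starting from `W(i, n) = 1`, gives the identity.
-/

open Classical in
noncomputable def pathCountFrom {V : Type*} [Fintype V] (G : SimpleGraph V) {n : ℕ}
    (x : Fin n ≃ V) (k : ℕ) (i : Fin n) (j : ℕ) : ℕ :=
  (Finset.univ.filter (fun p : Fin (k + 1) → Fin n =>
    StrictMono p ∧ p 0 = i ∧ (∀ l : Fin k, j ≤ (p l.succ : ℕ)) ∧
      ∀ l : Fin k, G.Adj (x (p l.castSucc)) (x (p l.succ)))).card

open Finset

section
variable {V : Type*} (G : SimpleGraph V) {n : ℕ} (x : Fin n ≃ V)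

open Classical in
noncomputable def pathFinset (k : ℕ) (i : Fin n) (j : ℕ) : Finset (Fin (k + 1) → Fin n) :=
  univ.filter (fun p : Fin (k + 1) → Fin n =>
    StrictMono p ∧ p 0 = i ∧ (∀ l : Fin k, j ≤ (p l.succ : ℕ)) ∧
      ∀ l : Fin k, G.Adj (x (p l.castSucc)) (x (p l.succ)))

lemma pathCountFrom_eq_card [Fintype V] (k : ℕ) (i : Fin n) (j : ℕ) :
    pathCountFrom G x k i j = (pathFinset G x k i j).card := rfl

variable {G x}

lemma mem_pathFinset {k : ℕ} {i : Fin n} {j : ℕ} {p : Fin (k + 1) → Fin n} :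
    p ∈ pathFinset G x k i j ↔ StrictMono p ∧ p 0 = i ∧ (∀ l : Fin k, j ≤ (p l.succ : ℕ)) ∧
      ∀ l : Fin k, G.Adj (x (p l.castSucc)) (x (p l.succ)) := by
  simp [pathFinset]

lemma cons_mem_pathFinset {k : ℕ} {i i' : Fin n} {j : ℕ} {q : Fin (k + 1) → Fin n} :
    Fin.cons i q ∈ pathFinset G x (k + 1) i' j ↔ i = i' ∧ i < q 0 ∧ j ≤ (q 0 : ℕ) ∧
      G.Adj (x i) (x (q 0)) ∧ q ∈ pathFinset G x k (q 0) (q 0 + 1) := by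
  simp only [mem_pathFinset, Fin.strictMono_cons, Fin.forall_fin_succ, Fin.cons_zero,
    Fin.cons_succ, Fin.castSucc_zero, ← Fin.succ_castSucc]
  constructor
  · rintro ⟨⟨⟨hi, -⟩, hq⟩, rfl, ⟨hj, -⟩, hadj, hadjs⟩
    exact ⟨rfl, hi, hj, hadj, hq, trivial, fun l => hq (Fin.succ_pos l), hadjs⟩
  · rintro ⟨rfl, hi, hj, hadj, hq, -, -, hadjs⟩
    have hq0 (l : Fin k) : q 0 < q l.succ := hq (Fin.succ_pos l)
    exact ⟨⟨⟨hi, fun l => hi.trans (hq0 l)⟩, hq⟩, rfl,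
      ⟨hj, fun l => hj.trans (hq0 l).le⟩, hadj, hadjs⟩

lemma card_pathFinset_succ [DecidableRel G.Adj] (k : ℕ) (i : Fin n) (j : ℕ) :
    (pathFinset G x (k + 1) i j).card = ∑ m ∈ univ.filter (fun m => i < m ∧ j ≤ (m : ℕ) ∧
      G.Adj (x i) (x m)), (pathFinset G x k m (m + 1)).card := by
  have hdisj : (↑(univ.filter fun m => i < m ∧ j ≤ (m : ℕ) ∧ G.Adj (x i) (x m)) :
      Set (Fin n)).PairwiseDisjoint fun m => pathFinset G x k m (m + 1) := by
    intro m _ m' _ hmm'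
    refine disjoint_left.2 fun q hq hq' => hmm' ?_
    rw [← (mem_pathFinset.1 hq).2.1, ← (mem_pathFinset.1 hq').2.1]
  rw [← card_biUnion hdisj]
  refine card_nbij' Fin.tail (fun q => (Fin.cons i q : Fin (k + 2) → Fin n))
    (fun p hp => ?_) (fun q hq => ?_) (fun p hp => ?_)
    (fun q _ => Fin.tail_cons (α := fun _ => Fin n) i q)
  · rw [mem_coe, ← Fin.cons_self_tail p, cons_mem_pathFinset] at hp
    obtain ⟨rfl, hi, hj, hadj, hq⟩ := hp
    exact mem_biUnion.2 ⟨Fin.tail p 0, mem_filter.2 ⟨mem_univ _, hi, hj, hadj⟩, hq⟩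
  · obtain ⟨m, hm, hq⟩ := mem_biUnion.1 hq
    obtain rfl := (mem_pathFinset.1 hq).2.1
    simp only [mem_filter, mem_univ, true_and] at hm
    exact cons_mem_pathFinset.2 ⟨rfl, hm.1, hm.2.1, hm.2.2, hq⟩
  · rw [← (mem_pathFinset.1 hp).2.1]
    exact Fin.cons_self_tail p

variable [Fintype V]

lemma pathCountFrom_succ [DecidableRel G.Adj] (k : ℕ) (i : Fin n) (j : ℕ) :
    pathCountFrom G x (k + 1) i j = ∑ m ∈ univ.filter (fun m => i < m ∧ j ≤ (m : ℕ) ∧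
      G.Adj (x i) (x m)), pathCountFrom G x k m (m + 1) :=
  card_pathFinset_succ k i j

lemma pathCountFrom_zero (i : Fin n) (j : ℕ) : pathCountFrom G x 0 i j = 1 := by
  rw [pathCountFrom_eq_card, card_eq_one]
  refine ⟨fun _ => i, eq_singleton_iff_unique_mem.2 ⟨?_, fun p hp => ?_⟩⟩
  · simp [mem_pathFinset, Subsingleton.strictMono]
  · funext l
    rw [Fin.fin_one_eq_zero l, (mem_pathFinset.1 hp).2.1]

lemma pathCountFrom_eq_zero_of_le {k : ℕ} {i : Fin n} (j : ℕ) (h : n ≤ i + k) :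
    pathCountFrom G x k i j = 0 := by
  classical
  induction k generalizing i j with
  | zero => exact absurd h (by simp)
  | succ k ih =>
    rw [pathCountFrom_succ]
    refine sum_eq_zero fun m hm => ih _ ?_
    have : (i : ℕ) < m := (mem_filter.1 hm).2.1
    omega

end

section
variable {V : Type*} [Fintype V] {G : SimpleGraph V} {n : ℕ} {x : Fin n ≃ V}
  {R : Type*} [CommSemiring R]

variable (G x) in
noncomputable def pathWeight (a : R) (i : Fin n) (j : ℕ) : R :=
  ∑ k ∈ range n, (pathCountFrom G x k i j : R) * a ^ k

lemma pathWeight_eq_one_add [DecidableRel G.Adj] (a : R) (i : Fin n) (j : ℕ) :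
    pathWeight G x a i j = 1 + a * ∑ m ∈ univ.filter (fun m => i < m ∧ j ≤ (m : ℕ) ∧
      G.Adj (x i) (x m)), pathWeight G x a m (m + 1) := by
  obtain ⟨n, rfl⟩ := Nat.exists_eq_add_one.2 i.pos
  -- A path from `m > i` has at most `n - 1` nodes, so `W(m, m+1)` only needs `k < n - 1`.
  have htrunc : ∀ m ∈ univ.filter (fun m => i < m ∧ j ≤ (m : ℕ) ∧ G.Adj (x i) (x m)),
      pathWeight G x a m (m + 1) = ∑ k ∈ range n, (pathCountFrom G x k m (m + 1) : R) * a ^ k := by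
    intro m hm
    have : (i : ℕ) < m := (mem_filter.1 hm).2.1
    rw [pathWeight, sum_range_succ, pathCountFrom_eq_zero_of_le _ (by omega), Nat.cast_zero,
      zero_mul, add_zero]
  rw [sum_congr rfl htrunc, mul_sum, pathWeight, sum_range_succ', pathCountFrom_zero, add_comm]
  simp only [pathCountFrom_succ, Nat.cast_sum, sum_mul, mul_sum]
  rw [sum_comm, Nat.cast_one, pow_zero, one_mul]
  congr 1
  exact sum_congr rfl fun m _ => sum_congr rfl fun k _ => by ring

lemma pathWeight_eq_one_of_le (a : R) (i : Fin n) {j : ℕ} (hj : n ≤ j) :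
    pathWeight G x a i j = 1 := by
  classical
  rw [pathWeight_eq_one_add, filter_false_of_mem fun m _ ⟨_, hm, _⟩ => by omega, sum_empty,
    mul_zero, add_zero]

lemma pathWeight_eq_pathWeight_succ_add [DecidableRel G.Adj] (a : R) {i e : Fin n} (hie : i < e) :
    pathWeight G x a i e = pathWeight G x a i (e + 1) +
      if G.Adj (x i) (x e) then a * pathWeight G x a e (e + 1) else 0 := by
  have hsplit (m : Fin n) : i < m ∧ (e : ℕ) ≤ m ∧ G.Adj (x i) (x m) ↔
      (m = e ∧ G.Adj (x i) (x e)) ∨ (i < m ∧ (e : ℕ) + 1 ≤ m ∧ G.Adj (x i) (x m)) := by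
    constructor
    · rintro ⟨him, hem, hadj⟩
      rcases hem.eq_or_lt with h | h
      · obtain rfl := Fin.ext h
        exact Or.inl ⟨rfl, hadj⟩
      · exact Or.inr ⟨him, h, hadj⟩
    · rintro (⟨rfl, hadj⟩ | ⟨him, hem, hadj⟩)
      · exact ⟨hie, le_rfl, hadj⟩
      · exact ⟨him, by omega, hadj⟩
  rw [pathWeight_eq_one_add, pathWeight_eq_one_add (j := e + 1), filter_congr fun m _ => hsplit m]
  split_ifs with hadj
  · simp only [hadj, and_true]
    rw [filter_or, filter_eq', if_pos (mem_univ _), ← insert_eq, sum_insert (by simp)]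
    ring
  · simp [hadj]

end

section
variable {V : Type*} [Fintype V] {G : SimpleGraph V} [DecidableRel G.Adj] {n : ℕ}
  {x : Fin n ≃ V} {R : Type*} [CommRing R] {a : R} {b T : Fin n → R}

lemma sum_mul_pathWeight_succ
    (hT : ∀ i, T i = a * (∑ j ∈ univ.filter (fun j => j < i ∧ G.Adj (x j) (x i)), T j) + b i)
    (e : Fin n) :
    (∑ i ∈ univ.filter (fun i : Fin n => (i : ℕ) < e + 1), T i * pathWeight G x a i (e + 1)) +
        ∑ i ∈ univ.filter (fun i : Fin n => (e : ℕ) + 1 ≤ i), b i * pathWeight G x a i (i + 1) =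
      (∑ i ∈ univ.filter (fun i : Fin n => (i : ℕ) < e), T i * pathWeight G x a i e) +
        ∑ i ∈ univ.filter (fun i : Fin n => (e : ℕ) ≤ i), b i * pathWeight G x a i (i + 1) := by
  have hlt : univ.filter (fun i : Fin n => (i : ℕ) < e + 1) =
      insert e (univ.filter fun i : Fin n => (i : ℕ) < e) := by
    ext i
    simp only [mem_filter, mem_univ, true_and, mem_insert, Fin.ext_iff]
    omega
  have hge : univ.filter (fun i : Fin n => (e : ℕ) ≤ i) =
      insert e (univ.filter fun i : Fin n => (e : ℕ) + 1 ≤ i) := by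
    ext i
    simp only [mem_filter, mem_univ, true_and, mem_insert, Fin.ext_iff]
    omega
  have hW : ∑ i ∈ univ.filter (fun i : Fin n => (i : ℕ) < e), T i * pathWeight G x a i e =
      (∑ i ∈ univ.filter (fun i : Fin n => (i : ℕ) < e), T i * pathWeight G x a i (e + 1)) +
        (∑ j ∈ univ.filter (fun j => j < e ∧ G.Adj (x j) (x e)), T j) *
          (a * pathWeight G x a e (e + 1)) := by
    rw [sum_congr rfl fun i hi => by
      rw [pathWeight_eq_pathWeight_succ_add a (mem_filter.1 hi).2], sum_mul]
    simp only [mul_add, sum_add_distrib, mul_ite, mul_zero]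
    rw [sum_ite, sum_const_zero, add_zero, filter_filter]
    rfl
  rw [hlt, hge, sum_insert (by simp), sum_insert (by simp), hW, hT e]
  ring

theorem sum_eq_sum_mul_pathWeight
    (hT : ∀ i, T i = a * (∑ j ∈ univ.filter (fun j => j < i ∧ G.Adj (x j) (x i)), T j) + b i)
    {η : ℕ} (hη : η ≤ n) :
    ∑ i, T i =
      (∑ i ∈ univ.filter (fun i : Fin n => (i : ℕ) < η), T i * pathWeight G x a i η) +
        ∑ i ∈ univ.filter (fun i : Fin n => η ≤ i), b i * pathWeight G x a i (i + 1) := by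
  induction hη using Nat.decreasingInduction with
  | self =>
    rw [filter_true_of_mem fun i _ => i.isLt, filter_false_of_mem fun i _ => not_le.2 i.isLt,
      sum_empty, add_zero]
    exact sum_congr rfl fun i _ => by rw [pathWeight_eq_one_of_le a i le_rfl, mul_one]
  | of_succ η hη ih => exact ih.trans (sum_mul_pathWeight_succ hT ⟨η, hη⟩)

end

theorem stmt7_general {V : Type*} [Fintype V] (G : SimpleGraph V)
    [DecidableRel G.Adj] (n : ℕ) (x : Fin n ≃ V) (lam C : ℝ)
    (T : Fin n → ℝ)
    (hT : ∀ i : Fin n, T i =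
      (2 / (5 * lam)) *
        (∑ j ∈ Finset.univ.filter (fun j : Fin n => j < i ∧ G.Adj (x j) (x i)), T j)
      + 10 * C * (G.degree (x i)) / lam)
    (η : ℕ) (hη : η < n) :
    (∑ i, T i) =
      (∑ i ∈ Finset.univ.filter (fun i : Fin n => (i : ℕ) < η),
        T i * ∑ k ∈ Finset.range n, (pathCountFrom G x k i η : ℝ) * (2 / (5 * lam)) ^ k)
      + ∑ i ∈ Finset.univ.filter (fun i : Fin n => η ≤ (i : ℕ)),
          (10 * C * (G.degree (x i)) / lam) *
            ∑ k ∈ Finset.range n,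
              (pathCountFrom G x k i ((i : ℕ) + 1) : ℝ) * (2 / (5 * lam)) ^ k :=
  sum_eq_sum_mul_pathWeight hT hη.le

/-- With `T` defined recursively by
`T(x_i) = (2/(5λ)) · Σ_{j < i, x_j ~ x_i} T(x_j) + 10·C·deg(x_i)/λ`, for every
`η ∈ {0, 1, …, n-1}` (here the first sum is over the first `η` vertices and the second over
the remaining ones):
`Σ_{i=1}^n T(x_i) = Σ_{i=1}^η T(x_i)·(Σ_{k=1}^n z_{k,i,η+1}·(2/(5λ))^{k-1})
  + Σ_{i=η+1}^n (10·C·deg(x_i)/λ)·(Σ_{k=1}^n z_{k,i}·(2/(5λ))^{k-1})`. -/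
theorem stmt7 {V : Type*} [Fintype V] [DecidableEq V] (G : SimpleGraph V)
    [DecidableRel G.Adj] (n : ℕ) (x : Fin n ≃ V) (lam C : ℝ) (hlam : 0 < lam) (hC : 0 < C)
    (T : Fin n → ℝ)
    (hT : ∀ i : Fin n, T i =
      (2 / (5 * lam)) *
        (∑ j ∈ Finset.univ.filter (fun j : Fin n => j < i ∧ G.Adj (x j) (x i)), T j)
      + 10 * C * (G.degree (x i)) / lam)
    (η : ℕ) (hη : η < n) :
    (∑ i, T i) =
      (∑ i ∈ Finset.univ.filter (fun i : Fin n => (i : ℕ) < η),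
        T i * ∑ k ∈ Finset.range n, (pathCountFrom G x k i η : ℝ) * (2 / (5 * lam)) ^ k)
      + ∑ i ∈ Finset.univ.filter (fun i : Fin n => η ≤ (i : ℕ)),
          (10 * C * (G.degree (x i)) / lam) *
            ∑ k ∈ Finset.range n,
              (pathCountFrom G x k i ((i : ℕ) + 1) : ℝ) * (2 / (5 * lam)) ^ k :=
  stmt7_general G n x lam C T hT η hη
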